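/- Under the hypotheses of the penalized mixed problem, there exists a constant C₁ depending only on the continuity/coercivity constants such that for all u ∈ H and p ∈ V, ‖u‖_H + |p|_{V̄} + ε‖p‖_V ≤ C₁ · sup over (v,q) ∈ H × V of [a(u,v) + b(v,p) − b(u,q) + ε² c(p,q)] / (‖v‖_H + |q|_{V̄} + ε‖q‖_V). -/

import Mathlib

/-!
Let `S` be the supremum on the right. Testing with `(v, q) = (u, p)` and using coercivity gives
`C⁻¹ (‖u‖² + ε²‖p‖²) ≤ S (‖u‖ + |p|_{V̄} + ε‖p‖)`, and testing with `(v, 0)` gives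
`|p|_{V̄} ≤ S + C ‖u‖`. Together these force `‖u‖ + ε‖p‖`, and then `|p|_{V̄}`, to be `O(S)`.
-/

/-- The weaker (semi) norm `|q|_{V̄} = sup_{v ≠ 0} b(v,q)/‖v‖_H` on `V`. -/
noncomputable def dualSemiNorm {H V : Type*}
    [NormedAddCommGroup H] [InnerProductSpace ℝ H]
    [NormedAddCommGroup V] [InnerProductSpace ℝ V]
    (b : H →ₗ[ℝ] V →ₗ[ℝ] ℝ) (q : V) : ℝ :=
  ⨆ v : {v : H // v ≠ 0}, b v q / ‖(v : H)‖

lemma bddAbove_range_div_of_le_mul {ι : Type*} {F D : ι → ℝ} {M : ℝ} (hM : 0 ≤ M)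
    (hD : ∀ i, 0 ≤ D i) (hFD : ∀ i, F i ≤ M * D i) :
    BddAbove (Set.range fun i => F i / D i) := by
  refine ⟨M, ?_⟩
  rintro _ ⟨i, rfl⟩
  exact div_le_of_le_mul₀ (hD i) hM (hFD i)

/-- Where `D i = 0` the quotient is the junk value `0`; there `F i ≤ M * 0` is what is used. -/
lemma le_iSup_div_mul_of_le_mul {ι : Type*} {F D : ι → ℝ} {M : ℝ} (hM : 0 ≤ M)
    (hD : ∀ i, 0 ≤ D i) (hFD : ∀ i, F i ≤ M * D i) (i : ι) :
    F i ≤ (⨆ j, F j / D j) * D i := by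
  rcases (hD i).eq_or_lt with hDi | hDi
  · simpa [← hDi] using hFD i
  · exact (div_le_iff₀ hDi).mp (le_ciSup (bddAbove_range_div_of_le_mul hM hD hFD) i)

lemma le_mul_of_sq_le_mul_add {T S κ : ℝ} (hS : 0 ≤ S) (hκ : 0 ≤ κ)
    (h : T ^ 2 ≤ κ * S * (T + S)) : T ≤ (2 * κ + 1) * S := by
  by_contra! hlt
  have hST : S < T := by nlinarith
  nlinarith [mul_nonneg hκ hS]

section DualSemiNorm

variable {H V : Type*}
    [NormedAddCommGroup H] [InnerProductSpace ℝ H]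
    [NormedAddCommGroup V] [InnerProductSpace ℝ V]
    {b : H →ₗ[ℝ] V →ₗ[ℝ] ℝ} {C : ℝ}

lemma bddAbove_dualSemiNorm (hb : ∀ v q, |b v q| ≤ C * ‖v‖ * ‖q‖) (q : V) :
    BddAbove (Set.range fun v : {v : H // v ≠ 0} => b v q / ‖(v : H)‖) := by
  refine ⟨C * ‖q‖, ?_⟩
  rintro _ ⟨v, rfl⟩
  rw [div_le_iff₀ (norm_pos_iff.mpr v.2)]
  calc b v q ≤ |b v q| := le_abs_self _
    _ ≤ C * ‖q‖ * ‖(v : H)‖ := by linarith [hb v q]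

lemma le_dualSemiNorm_mul_norm (hb : ∀ v q, |b v q| ≤ C * ‖v‖ * ‖q‖) (v : H) (q : V) :
    b v q ≤ dualSemiNorm b q * ‖v‖ := by
  rcases eq_or_ne v 0 with rfl | hv
  · simp
  · exact (div_le_iff₀ (norm_pos_iff.mpr hv)).mp
      (le_ciSup (bddAbove_dualSemiNorm hb q) ⟨v, hv⟩)

lemma dualSemiNorm_nonneg (hb : ∀ v q, |b v q| ≤ C * ‖v‖ * ‖q‖) (q : V) :
    0 ≤ dualSemiNorm b q := by
  rcases isEmpty_or_nonempty {v : H // v ≠ 0} with hH | ⟨v, hv⟩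
  · simp [dualSemiNorm]
  · have hpos := le_dualSemiNorm_mul_norm hb v q
    have hneg := le_dualSemiNorm_mul_norm hb (-v) q
    rw [map_neg, LinearMap.neg_apply, norm_neg] at hneg
    exact nonneg_of_mul_nonneg_left (by linarith) (norm_pos_iff.mpr hv)

lemma dualSemiNorm_le {M : ℝ} (hM : 0 ≤ M) {q : V} (h : ∀ v, b v q ≤ M * ‖v‖) :
    dualSemiNorm b q ≤ M :=
  Real.iSup_le (fun v => div_le_of_le_mul₀ (norm_nonneg _) hM (h v)) hM

lemma dualSemiNorm_zero : dualSemiNorm b (0 : V) = 0 := by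
  simp [dualSemiNorm]

end DualSemiNorm

section MixedForm

variable {H V : Type*}
    [NormedAddCommGroup H] [InnerProductSpace ℝ H]
    [NormedAddCommGroup V] [InnerProductSpace ℝ V]
    (a : H →ₗ[ℝ] H →ₗ[ℝ] ℝ) (c : V →ₗ[ℝ] V →ₗ[ℝ] ℝ) (b : H →ₗ[ℝ] V →ₗ[ℝ] ℝ) (ε : ℝ)

def mixedForm (u : H) (p : V) (vq : H × V) : ℝ :=
  a u vq.1 + b vq.1 p - b u vq.2 + ε ^ 2 * c p vq.2

noncomputable def mixedNorm (vq : H × V) : ℝ :=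
  ‖vq.1‖ + dualSemiNorm b vq.2 + ε * ‖vq.2‖

variable {a b c ε} {C : ℝ}

lemma mixedNorm_nonneg (hb : ∀ v q, |b v q| ≤ C * ‖v‖ * ‖q‖) (hε : 0 ≤ ε) (vq : H × V) :
    0 ≤ mixedNorm b ε vq := by
  have := dualSemiNorm_nonneg hb vq.2
  unfold mixedNorm
  positivity

lemma mixedForm_le_mul_mixedNorm (hC : 0 ≤ C) (hε : 0 ≤ ε)
    (ha : ∀ u v, |a u v| ≤ C * ‖u‖ * ‖v‖) (hc : ∀ p q, |c p q| ≤ C * ‖p‖ * ‖q‖)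
    (hb : ∀ v q, |b v q| ≤ C * ‖v‖ * ‖q‖) (u : H) (p : V) (vq : H × V) :
    mixedForm a c b ε u p vq
      ≤ (C * ‖u‖ + dualSemiNorm b p + ‖u‖ + ε * C * ‖p‖) * mixedNorm b ε vq := by
  obtain ⟨v, q⟩ := vq
  have hauv : a u v ≤ C * ‖u‖ * ‖v‖ := (le_abs_self _).trans (ha u v)
  have hbvp := le_dualSemiNorm_mul_norm hb v p
  have hbuq : -b u q ≤ dualSemiNorm b q * ‖u‖ := by
    simpa using le_dualSemiNorm_mul_norm hb (-u) q
  have hcpq : ε ^ 2 * c p q ≤ ε * C * ‖p‖ * (ε * ‖q‖) := by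
    nlinarith [(le_abs_self _).trans (hc p q), sq_nonneg ε]
  have hp := dualSemiNorm_nonneg hb p
  have hq := dualSemiNorm_nonneg hb q
  unfold mixedForm mixedNorm
  nlinarith [mul_nonneg (by positivity : 0 ≤ ‖u‖ + ε * C * ‖p‖) (norm_nonneg v),
    mul_nonneg (by positivity : 0 ≤ C * ‖u‖ + dualSemiNorm b p + ε * C * ‖p‖) hq,
    mul_nonneg (by positivity : 0 ≤ C * ‖u‖ + dualSemiNorm b p + ‖u‖)
      (by positivity : 0 ≤ ε * ‖q‖)]

lemma coercive_le_mixedForm_diag (ha : ∀ u, C⁻¹ * ‖u‖ ^ 2 ≤ a u u)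
    (hc : ∀ p, C⁻¹ * ‖p‖ ^ 2 ≤ c p p) (u : H) (p : V) :
    C⁻¹ * (‖u‖ ^ 2 + (ε * ‖p‖) ^ 2) ≤ mixedForm a c b ε u p (u, p) := by
  have := mul_le_mul_of_nonneg_left (hc p) (sq_nonneg ε)
  unfold mixedForm
  nlinarith [ha u]

end MixedForm

lemma add_add_le_mul_of_coercive {X Y P S C : ℝ} (hY : 0 ≤ Y) (hS : 0 ≤ S)
    (hC : 0 < C) (hcoer : C⁻¹ * (X ^ 2 + Y ^ 2) ≤ S * (X + P + Y)) (hP : P ≤ S + C * X) :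
    X + P + Y ≤ ((1 + C) * (4 * C * (1 + C) + 1) + 1) * S := by
  have hsq : X ^ 2 + Y ^ 2 ≤ C * S * (X + P + Y) := by
    rwa [inv_mul_le_iff₀ hC, ← mul_assoc] at hcoer
  have hT : (X + Y) ^ 2 ≤ 2 * C * (1 + C) * S * ((X + Y) + S) := by
    nlinarith [sq_nonneg (X - Y), mul_nonneg hC.le hS, mul_nonneg (mul_nonneg hC.le hC.le) hS]
  have := le_mul_of_sq_le_mul_add hS (by positivity) hT
  nlinarith [mul_nonneg hC.le hS]

theorem stmt5_general
    {H V : Type*}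
    [NormedAddCommGroup H] [InnerProductSpace ℝ H]
    [NormedAddCommGroup V] [InnerProductSpace ℝ V]
    (a : H →ₗ[ℝ] H →ₗ[ℝ] ℝ) (c : V →ₗ[ℝ] V →ₗ[ℝ] ℝ) (b : H →ₗ[ℝ] V →ₗ[ℝ] ℝ)
    (C : ℝ) (hC : 0 < C)
    (ha_bound : ∀ u v : H, |a u v| ≤ C * ‖u‖ * ‖v‖)
    (ha_coer : ∀ u : H, C⁻¹ * ‖u‖ ^ 2 ≤ a u u)
    (hc_bound : ∀ p q : V, |c p q| ≤ C * ‖p‖ * ‖q‖)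
    (hc_coer : ∀ p : V, C⁻¹ * ‖p‖ ^ 2 ≤ c p p)
    (hb_bound : ∀ (v : H) (q : V), |b v q| ≤ C * ‖v‖ * ‖q‖)
    (ε : ℝ) (hε : 0 < ε) :
    ∃ C₁ : ℝ, 0 < C₁ ∧ ∀ (u : H) (p : V),
      ‖u‖ + dualSemiNorm b p + ε * ‖p‖
        ≤ C₁ * (⨆ vq : H × V,
            (a u vq.1 + b vq.1 p - b u vq.2 + ε ^ 2 * c p vq.2) /
              (‖vq.1‖ + dualSemiNorm b vq.2 + ε * ‖vq.2‖)) := by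
  refine ⟨(1 + C) * (4 * C * (1 + C) + 1) + 1, by positivity, fun u p => ?_⟩
  change _ ≤ _ * ⨆ vq, mixedForm a c b ε u p vq / mixedNorm b ε vq
  set S := ⨆ vq, mixedForm a c b ε u p vq / mixedNorm b ε vq
  have hp := dualSemiNorm_nonneg hb_bound p
  have hM : 0 ≤ C * ‖u‖ + dualSemiNorm b p + ‖u‖ + ε * C * ‖p‖ := by positivity
  have hD := mixedNorm_nonneg hb_bound hε.le
  have hFM := mixedForm_le_mul_mixedNorm hC.le hε.le ha_bound hc_bound hb_bound u p
  have hFD : ∀ vq, mixedForm a c b ε u p vq ≤ S * mixedNorm b ε vq :=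
    le_iSup_div_mul_of_le_mul hM hD hFM
  -- the quotient at `(0, 0)` is `0 / 0 = 0`
  have hS : 0 ≤ S :=
    calc 0 = mixedForm a c b ε u p 0 / mixedNorm b ε 0 := by simp [mixedForm]
      _ ≤ S := le_ciSup (bddAbove_range_div_of_le_mul hM hD hFM) 0
  have hcoer : C⁻¹ * (‖u‖ ^ 2 + (ε * ‖p‖) ^ 2) ≤ S * mixedNorm b ε (u, p) :=
    (coercive_le_mixedForm_diag ha_coer hc_coer u p).trans (hFD (u, p))
  have hdual : dualSemiNorm b p ≤ S + C * ‖u‖ := by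
    refine dualSemiNorm_le (by positivity) fun v => ?_
    have := hFD (v, 0)
    simp only [mixedForm, mixedNorm, map_zero, dualSemiNorm_zero, norm_zero, sub_zero, mul_zero,
      add_zero] at this
    nlinarith [neg_abs_le (a u v), ha_bound u v]
  exact add_add_le_mul_of_coercive (by positivity) hS hC hcoer hdual

/-- Lower bound (inf-sup stability) part of the two-sided estimate of
Theorem `isomorphism-thm`: the sup of the mixed form quotient dominates
`C₁⁻¹ (‖u‖_H + |p|_{V̄} + ε‖p‖_V)`. -/
theorem stmt5
    {H V : Type*}
    [NormedAddCommGroup H] [InnerProductSpace ℝ H] [CompleteSpace H]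
    [NormedAddCommGroup V] [InnerProductSpace ℝ V] [CompleteSpace V]
    (a : H →ₗ[ℝ] H →ₗ[ℝ] ℝ) (c : V →ₗ[ℝ] V →ₗ[ℝ] ℝ) (b : H →ₗ[ℝ] V →ₗ[ℝ] ℝ)
    (C : ℝ) (hC : 0 < C)
    (ha_symm : ∀ u v : H, a u v = a v u)
    (ha_bound : ∀ u v : H, |a u v| ≤ C * ‖u‖ * ‖v‖)
    (ha_coer : ∀ u : H, C⁻¹ * ‖u‖ ^ 2 ≤ a u u)
    (hc_symm : ∀ p q : V, c p q = c q p)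
    (hc_bound : ∀ p q : V, |c p q| ≤ C * ‖p‖ * ‖q‖)
    (hc_coer : ∀ p : V, C⁻¹ * ‖p‖ ^ 2 ≤ c p p)
    (hb_bound : ∀ (v : H) (q : V), |b v q| ≤ C * ‖v‖ * ‖q‖)
    (ε : ℝ) (hε : 0 < ε) :
    ∃ C₁ : ℝ, 0 < C₁ ∧ ∀ (u : H) (p : V),
      ‖u‖ + dualSemiNorm b p + ε * ‖p‖
        ≤ C₁ * (⨆ vq : H × V,
            (a u vq.1 + b vq.1 p - b u vq.2 + ε ^ 2 * c p vq.2) /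
              (‖vq.1‖ + dualSemiNorm b vq.2 + ε * ‖vq.2‖)) :=
  stmt5_general a c b C hC ha_bound ha_coer hc_bound hc_coer hb_bound ε hε
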